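/- Let G be an n-player game in which player i has player-specific Lipschitz constants λ_i with Σλ_i = Λ and λ_1 ≤ … ≤ λ_n, let L_i = max{n·λ_i/Λ, 1} (assumed integral), and form the population game G' replacing player i by L_i copies, each copy playing G against the population averages of the other groups. Then G' is (Λ/n)-Lipschitz. -/

import Mathlib

open Finset

noncomputable section

def pureStrat {m : ℕ} (j : Fin m) : Fin m → ℝ := fun j' => if j' = j then 1 else 0

def expPay {n m : ℕ} (u : (Fin n → Fin m) → ℝ) (p : Fin n → Fin m → ℝ) : ℝ :=
  ∑ a : Fin n → Fin m, (∏ i, p i (a i)) * u a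

/-- Empirical mixed strategy of group `i` in the population game with group sizes `L`. -/
def empS {n m : ℕ} {L : Fin n → ℕ} (a : (Σ i : Fin n, Fin (L i)) → Fin m) :
    Fin n → Fin m → ℝ :=
  fun i j => ((univ.filter fun ℓ : Fin (L i) => a ⟨i, ℓ⟩ = j).card : ℝ) / (L i)

/-- Payoff of copy `v = ⟨i, ℓ⟩` in the population game `g_G(L₁,…,L_n)`: player `i`'s payoff
    in `G` playing `v`'s own action against the population averages of the other groups. -/
def popPay {n m : ℕ} {L : Fin n → ℕ} (u : Fin n → (Fin n → Fin m) → ℝ)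
    (v : Σ i : Fin n, Fin (L i)) (a : (Σ i : Fin n, Fin (L i)) → Fin m) : ℝ :=
  expPay (u v.1) (Function.update (empS a) v.1 (pureStrat (a v)))

/-- Player-specific Lipschitz condition for `G`. -/
def IsMultiLip {n m : ℕ} (lam : Fin n → ℝ) (u : Fin n → (Fin n → Fin m) → ℝ) : Prop :=
  ∀ (i i' : Fin n), i' ≠ i → ∀ a a' : Fin n → Fin m,
    (∀ k, k ≠ i → a k = a' k) → |u i' a - u i' a'| ≤ lam i

/-! If a copy `w ≠ v` switches its action from `a w` to `b`, the empirical strategy of its group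
`k = w.1` moves by `(e_{a w} - e_b) / L k`, where `e_j = pureStrat j`, and nothing else changes.
For `k = v.1` that row is overwritten by `v`'s own pure strategy. Otherwise the expected payoff is
affine in row `k`, so `v`'s payoff changes by `(E_{a w} - E_b) / L k`, where `E_j` is the payoff
against `k` playing `j`. The difference `E_{a w} - E_b` is an average of payoff differences under
unilateral deviations of player `k`, hence at most `λ_k`, and `λ_k / L_k ≤ Λ / n` since
`L_k ≥ n λ_k / Λ`. Changing the differing copies one at a time gives the bound. -/

open Function

lemma pureStrat_mem_stdSimplex {m : ℕ} (j : Fin m) : pureStrat j ∈ stdSimplex ℝ (Fin m) := by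
  convert single_mem_stdSimplex ℝ j using 1
  ext j'
  simp [pureStrat, Pi.single_apply]

lemma sum_pureStrat_mul {m : ℕ} (j : Fin m) (f : Fin m → ℝ) :
    ∑ j', pureStrat j j' * f j' = f j := by
  simp [pureStrat]

lemma sum_mul_pureStrat {m : ℕ} (x : Fin m → ℝ) (j : Fin m) :
    ∑ j', x j' * pureStrat j' j = x j := by
  simp [pureStrat]

section expPay

variable {n m : ℕ}

lemma prod_update_apply (p : Fin n → Fin m → ℝ) (k : Fin n) (x : Fin m → ℝ)
    (a : Fin n → Fin m) :
    ∏ i, update p k x i (a i) = x (a k) * ∏ i ∈ univ.erase k, p i (a i) := by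
  rw [← mul_prod_erase _ _ (mem_univ k), update_self]
  congr 1
  exact prod_congr rfl fun i hi => by rw [update_of_ne (ne_of_mem_erase hi)]

lemma expPay_update_eq_sum (u : (Fin n → Fin m) → ℝ) (p : Fin n → Fin m → ℝ) (k : Fin n)
    (x : Fin m → ℝ) :
    expPay u (update p k x) = ∑ j, x j * expPay u (update p k (pureStrat j)) := by
  simp only [expPay, prod_update_apply, mul_sum]
  rw [sum_comm]
  refine sum_congr rfl fun a _ => ?_
  simp only [← mul_assoc]
  rw [← sum_mul, ← sum_mul, sum_mul_pureStrat]

lemma expPay_update_sub_expPay_update (u : (Fin n → Fin m) → ℝ) (p : Fin n → Fin m → ℝ)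
    (k : Fin n) (x y : Fin m → ℝ) :
    expPay u (update p k x) - expPay u (update p k y) =
      ∑ j, (x j - y j) * expPay u (update p k (pureStrat j)) := by
  rw [expPay_update_eq_sum u p k x, expPay_update_eq_sum u p k y, ← sum_sub_distrib]
  simp only [sub_mul]

lemma expPay_update_pureStrat (u : (Fin n → Fin m) → ℝ) (p : Fin n → Fin m → ℝ) (k : Fin n)
    (j j₀ : Fin m) :
    expPay u (update p k (pureStrat j)) =
      expPay (fun a => u (update a k j)) (update p k (pureStrat j₀)) := by
  have hmove : expPay u (update p k (pureStrat j)) =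
      expPay (fun a => u (update a k j)) (update p k (pureStrat j)) := by
    refine sum_congr rfl fun a _ => ?_
    rcases eq_or_ne (a k) j with h | h
    · simp only [← h, update_eq_self]
    · simp [prod_update_apply, pureStrat, h]
  let σ : Equiv.Perm (Fin n → Fin m) :=
    Involutive.toPerm (fun a => update a k (Equiv.swap j j₀ (a k))) fun a => by simp
  have hσ : ∀ a, σ a = update a k (Equiv.swap j j₀ (a k)) := fun _ => rfl
  have hrest : ∀ a c, ∏ i ∈ univ.erase k, p i (update a k c i) = ∏ i ∈ univ.erase k, p i (a i) :=
    fun a c => prod_congr rfl fun i hi => by rw [update_of_ne (ne_of_mem_erase hi)]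
  rw [hmove, expPay, ← Equiv.sum_comp σ]
  refine sum_congr rfl fun a _ => ?_
  simp only [hσ, prod_update_apply, pureStrat, hrest, update_self, update_idem,
    Equiv.swap_apply_eq_iff, Equiv.swap_apply_left]

lemma expPay_sub (u u' : (Fin n → Fin m) → ℝ) (p : Fin n → Fin m → ℝ) :
    expPay u p - expPay u' p = expPay (fun a => u a - u' a) p := by
  unfold expPay
  rw [← sum_sub_distrib]
  exact sum_congr rfl fun a _ => (mul_sub _ _ _).symm

lemma abs_expPay_le {u : (Fin n → Fin m) → ℝ} {p : Fin n → Fin m → ℝ} {c : ℝ}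
    (hp : ∀ i, p i ∈ stdSimplex ℝ (Fin m)) (hu : ∀ a, |u a| ≤ c) : |expPay u p| ≤ c := by
  have hw : ∀ a : Fin n → Fin m, 0 ≤ ∏ i, p i (a i) :=
    fun a => prod_nonneg fun i _ => (hp i).1 (a i)
  have hw1 : ∑ a : Fin n → Fin m, ∏ i, p i (a i) = 1 := by
    rw [← Fintype.prod_sum]
    exact prod_eq_one fun i _ => (hp i).2
  calc |expPay u p| ≤ ∑ a, (∏ i, p i (a i)) * |u a| := by
        simpa only [expPay, abs_mul, abs_of_nonneg (hw _)] using
          abs_sum_le_sum_abs (fun a => (∏ i, p i (a i)) * u a) univ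
    _ ≤ ∑ a, (∏ i, p i (a i)) * c := sum_le_sum fun a _ => mul_le_mul_of_nonneg_left (hu a) (hw a)
    _ = c := by rw [← sum_mul, hw1, one_mul]

lemma abs_expPay_update_pureStrat_sub_le {u : (Fin n → Fin m) → ℝ} {p : Fin n → Fin m → ℝ}
    {k : Fin n} {c : ℝ} (hp : ∀ i, p i ∈ stdSimplex ℝ (Fin m))
    (hu : ∀ a a', (∀ i, i ≠ k → a i = a' i) → |u a - u a'| ≤ c) (j₁ j₂ : Fin m) :
    |expPay u (update p k (pureStrat j₁)) - expPay u (update p k (pureStrat j₂))| ≤ c := by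
  rw [expPay_update_pureStrat u p k j₁ j₁, expPay_update_pureStrat u p k j₂ j₁, expPay_sub]
  refine abs_expPay_le (fun i => ?_) fun a => ?_
  · rcases eq_or_ne i k with rfl | hi
    · simpa only [update_self] using pureStrat_mem_stdSimplex j₁
    · simpa only [update_of_ne hi] using hp i
  · exact hu _ _ fun i hi => by rw [update_of_ne hi, update_of_ne hi]

end expPay

section empS

variable {n m : ℕ} {L : Fin n → ℕ}

lemma empS_eq_sum_pureStrat (a : (Σ i : Fin n, Fin (L i)) → Fin m) (i : Fin n) (j : Fin m) :
    empS a i j = (∑ ℓ, pureStrat (a ⟨i, ℓ⟩) j) / L i := by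
  rw [empS, natCast_card_filter]
  simp only [pureStrat, @eq_comm _ j]

lemma empS_mem_stdSimplex (a : (Σ i : Fin n, Fin (L i)) → Fin m) {i : Fin n} (hi : L i ≠ 0) :
    empS a i ∈ stdSimplex ℝ (Fin m) := by
  refine ⟨fun j => by unfold empS; positivity, ?_⟩
  simp only [empS_eq_sum_pureStrat, ← sum_div]
  rw [sum_comm]
  simp [(pureStrat_mem_stdSimplex _).2, hi]

lemma empS_update_of_ne (a : (Σ i : Fin n, Fin (L i)) → Fin m) (w : Σ i : Fin n, Fin (L i))
    (b : Fin m) {i : Fin n} (hi : i ≠ w.1) : empS (update a w b) i = empS a i := by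
  ext j
  simp only [empS_eq_sum_pureStrat]
  congr 2
  ext ℓ
  rw [update_of_ne fun h => hi (congrArg Sigma.fst h)]

lemma empS_sub_empS_update (a : (Σ i : Fin n, Fin (L i)) → Fin m) (k : Fin n) (ℓ : Fin (L k))
    (b j : Fin m) :
    empS a k j - empS (update a ⟨k, ℓ⟩ b) k j = (pureStrat (a ⟨k, ℓ⟩) j - pureStrat b j) / L k := by
  simp only [empS_eq_sum_pureStrat, ← sub_div, ← sum_sub_distrib]
  rw [Fintype.sum_eq_single ℓ fun ℓ' hℓ' => by simp [hℓ']]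
  simp

end empS

section popPay

variable {n m : ℕ} {L : Fin n → ℕ} {u : Fin n → (Fin n → Fin m) → ℝ}
  {v w : Σ i : Fin n, Fin (L i)}

lemma popPay_update_of_fst_eq (hwv : w ≠ v) (h : w.1 = v.1)
    (a : (Σ i : Fin n, Fin (L i)) → Fin m) (b : Fin m) :
    popPay u v (update a w b) = popPay u v a := by
  unfold popPay
  rw [update_of_ne hwv.symm]
  congr 1
  ext i : 1
  rcases eq_or_ne i v.1 with rfl | hi
  · simp only [update_self]
  · rw [update_of_ne hi, update_of_ne hi, empS_update_of_ne a w b (h ▸ hi)]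

lemma abs_popPay_sub_popPay_update_le {lam : Fin n → ℝ} (hML : IsMultiLip lam u)
    (hL : ∀ i, L i ≠ 0) (h : w.1 ≠ v.1) (a : (Σ i : Fin n, Fin (L i)) → Fin m) (b : Fin m) :
    |popPay u v a - popPay u v (update a w b)| ≤ lam w.1 / L w.1 := by
  obtain ⟨k, ℓ⟩ := w
  set r := update (empS a) v.1 (pureStrat (a v))
  have hr : ∀ i, r i ∈ stdSimplex ℝ (Fin m) := by
    intro i
    rcases eq_or_ne i v.1 with rfl | hi
    · simpa [r] using pureStrat_mem_stdSimplex (a v)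
    · simpa [r, update_of_ne hi] using empS_mem_stdSimplex a (hL i)
  have hpop : popPay u v a = expPay (u v.1) (update r k (empS a k)) := by
    rw [← update_of_ne h (pureStrat (a v)) (empS a), update_eq_self]
    rfl
  have hpop' : popPay u v (update a ⟨k, ℓ⟩ b) =
      expPay (u v.1) (update r k (empS (update a ⟨k, ℓ⟩ b) k)) := by
    unfold popPay
    rw [update_of_ne fun hv => h (congrArg Sigma.fst hv).symm]
    congr 1
    ext i : 1
    rcases eq_or_ne i k with rfl | hik
    · simp [r, h]
    · rw [update_of_ne hik]
      rcases eq_or_ne i v.1 with rfl | hiv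
      · simp [r]
      · simp only [r, update_of_ne hiv, empS_update_of_ne a ⟨k, ℓ⟩ b hik]
  rw [hpop, hpop', expPay_update_sub_expPay_update]
  simp only [empS_sub_empS_update, div_mul_eq_mul_div, ← sum_div, sub_mul, sum_sub_distrib,
    sum_pureStrat_mul]
  rw [abs_div, Nat.abs_cast]
  gcongr
  exact abs_expPay_update_pureStrat_sub_le hr (hML k v.1 (Ne.symm h)) _ _

end popPay

lemma abs_sub_le_mul_card_of_update {ι : Type*} [DecidableEq ι] {β : ι → Type*}
    {F : (∀ i, β i) → ℝ} {P : ι → Prop} {c : ℝ}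
    (hF : ∀ a i b, P i → |F a - F (update a i b)| ≤ c) (s : Finset ι) (hs : ∀ i ∈ s, P i)
    {a a' : ∀ i, β i} (haa' : ∀ i ∉ s, a i = a' i) : |F a - F a'| ≤ c * #s := by
  induction s using Finset.induction_on generalizing a with
  | empty =>
    obtain rfl : a = a' := funext fun i => haa' i (notMem_empty i)
    simp
  | insert x t hx ih =>
    have hmid : ∀ i ∉ t, update a x (a' x) i = a' i := by
      intro i hi
      rcases eq_or_ne i x with rfl | hix
      · exact update_self ..
      · rw [update_of_ne hix]
        exact haa' i (by simp [hix, hi])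
    calc |F a - F a'|
        ≤ |F a - F (update a x (a' x))| + |F (update a x (a' x)) - F a'| := abs_sub_le _ _ _
      _ ≤ c + c * #t :=
          add_le_add (hF _ _ _ (hs x (mem_insert_self x t)))
            (ih (fun i hi => hs i (mem_insert_of_mem hi)) hmid)
      _ = c * #(insert x t) := by rw [card_insert_of_notMem hx]; push_cast; ring

lemma div_max_mul_div_one_le {x Λ N : ℝ} (hΛ : 0 < Λ) (hN : 0 < N) :
    x / max (N * x / Λ) 1 ≤ Λ / N := by
  have hM : 0 < max (N * x / Λ) 1 := lt_max_of_lt_right one_pos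
  rw [div_le_div_iff₀ hM hN, mul_comm x]
  exact (div_le_iff₀' hΛ).1 (le_max_left _ _)

theorem population_game_lipschitz_general (n m : ℕ) (Λ : ℝ) (hΛ : 0 < Λ)
    (lam : Fin n → ℝ)
    (u : Fin n → (Fin n → Fin m) → ℝ)
    (hML : IsMultiLip lam u)
    (L : Fin n → ℕ) (hL : ∀ i, (L i : ℝ) = max ((n : ℝ) * lam i / Λ) 1) :
    ∀ (v : Σ i : Fin n, Fin (L i)) (a a' : (Σ i : Fin n, Fin (L i)) → Fin m),
      a v = a' v →
      |popPay u v a - popPay u v a'| ≤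
        (Λ / n) * ((univ.filter fun w : Σ i : Fin n, Fin (L i) => w ≠ v ∧ a w ≠ a' w).card : ℝ) := by
  intro v a a' hv
  have hL0 : ∀ i, L i ≠ 0 := fun i => by
    have h1 : (1 : ℝ) ≤ L i := hL i ▸ le_max_right _ _
    exact_mod_cast (one_pos.trans_le h1).ne'
  have hstep : ∀ a w b, w ≠ v → |popPay u v a - popPay u v (update a w b)| ≤ Λ / n := by
    intro a w b hwv
    rcases eq_or_ne w.1 v.1 with h | h
    · rw [popPay_update_of_fst_eq hwv h, sub_self, abs_zero]
      exact div_nonneg hΛ.le n.cast_nonneg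
    · refine (abs_popPay_sub_popPay_update_le hML hL0 h a b).trans ?_
      rw [hL]
      exact div_max_mul_div_one_le hΛ (Nat.cast_pos.2 w.1.pos)
  refine abs_sub_le_mul_card_of_update hstep _ (fun w hw => (mem_filter.1 hw).2.1) fun w hw => ?_
  by_contra hne
  exact hw (mem_filter.2 ⟨mem_univ w, fun h => hne (h ▸ hv), hne⟩)

/-- The population game obtained from a Multi-Lipschitz game `G` with constants
    λ₁ ≤ … ≤ λ_n summing to Λ, with group sizes `L i = max{n·λ_i/Λ, 1}` (assumed integral),
    is (Λ/n)-Lipschitz. -/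
theorem population_game_lipschitz (n m : ℕ) (hn : 0 < n) (Λ : ℝ) (hΛ : 0 < Λ)
    (lam : Fin n → ℝ) (hnn : ∀ i, 0 ≤ lam i) (hmono : Monotone lam)
    (hsum : ∑ i, lam i = Λ)
    (u : Fin n → (Fin n → Fin m) → ℝ) (hu : ∀ i a, 0 ≤ u i a ∧ u i a ≤ 1)
    (hML : IsMultiLip lam u)
    (L : Fin n → ℕ) (hL : ∀ i, (L i : ℝ) = max ((n : ℝ) * lam i / Λ) 1) :
    ∀ (v : Σ i : Fin n, Fin (L i)) (a a' : (Σ i : Fin n, Fin (L i)) → Fin m),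
      a v = a' v →
      |popPay u v a - popPay u v a'| ≤
        (Λ / n) * ((univ.filter fun w : Σ i : Fin n, Fin (L i) => w ≠ v ∧ a w ≠ a' w).card : ℝ) :=
  population_game_lipschitz_general n m Λ hΛ lam u hML L hL
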